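/- arXiv:1308.0510 — 5 statements merged into one kernel-verified Lean document; each statement's English description precedes it below -/
import Mathlib

section
/- Let N be a real S×R matrix and let C = {f ∈ ℝ^R : N f = 0 and f_r ≥ 0 for all r in a designated set R_irr of irreversible reactions}. A vector e ∈ ℝ^R is an elementary flux mode (a nonzero element of C with inclusion-minimal support among nonzero elements of C) if and only if e is a nonzero element of C whose support is inclusion-minimal among supports of nonzero elements of ker(N). -/
/-- The flux cone of a metabolic network with stoichiometric matrix `N` and
irreversible reactions `Rirr`. -/
def fluxCone {S R : Type*} [Fintype R] (N : Matrix S R ℝ) (Rirr : Set R) :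
    Set (R → ℝ) :=
  {f | N.mulVec f = 0 ∧ ∀ r ∈ Rirr, 0 ≤ f r}

/-- An elementary flux mode: a nonzero element of the flux cone with
inclusion-minimal support among nonzero elements of the flux cone. -/
def IsEFM {S R : Type*} [Fintype R] (N : Matrix S R ℝ) (Rirr : Set R)
    (e : R → ℝ) : Prop :=
  e ∈ fluxCone N Rirr ∧ e ≠ 0 ∧
    ∀ g ∈ fluxCone N Rirr, g ≠ 0 →
      Function.support g ⊆ Function.support e →
      Function.support g = Function.support e

/-- `e` is an EFM iff `e` is a nonzero element of the flux cone whose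
support is inclusion-minimal among supports of nonzero elements of `ker N`. -/
theorem efm_iff_elementary_vector_of_ker {S R : Type*} [Fintype S] [Fintype R]
    (N : Matrix S R ℝ) (Rirr : Set R) (e : R → ℝ) :
    IsEFM N Rirr e ↔
      (e ∈ fluxCone N Rirr ∧ e ≠ 0 ∧
        ∀ g : R → ℝ, N.mulVec g = 0 → g ≠ 0 →
          Function.support g ⊆ Function.support e →
          Function.support g = Function.support e) := by
  classical
  constructor
  · rintro ⟨hC, hne, hmin⟩
    refine ⟨hC, hne, fun g hg hgne hsub => ?_⟩
    set s : Finset R := Finset.univ.filter (fun r => g r ≠ 0) with hs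
    have hsne : s.Nonempty := by
      obtain ⟨r, hr⟩ := Function.ne_iff.mp hgne
      exact ⟨r, by simp [hs]; simpa using hr⟩
    obtain ⟨r0, hr0s, hr0min⟩ := s.exists_min_image (fun r => |e r / g r|) hsne
    have hg0 : g r0 ≠ 0 := by simpa [hs] using hr0s
    set t := e r0 / g r0 with ht
    set h : R → ℝ := e - t • g with hh
    have happ : ∀ r, h r = e r - t * g r := fun r => by
      simp [hh, Pi.sub_apply, smul_eq_mul]
    have hker : N.mulVec h = 0 := by
      rw [hh, Matrix.mulVec_sub, Matrix.mulVec_smul, hC.1, hg]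
      simp
    have hnn : ∀ r ∈ Rirr, 0 ≤ h r := by
      intro r hr
      by_cases hgr : g r = 0
      · rw [happ, hgr, mul_zero, sub_zero]; exact hC.2 r hr
      · have her : e r ≠ 0 := hsub hgr
        have herpos : 0 < e r := lt_of_le_of_ne (hC.2 r hr) (Ne.symm her)
        have habs : |t| ≤ |e r / g r| := hr0min r (by simp [hs, hgr])
        rw [happ, sub_nonneg]
        rcases Ne.lt_or_gt hgr with hgneg | hgpos
        · have hdivneg : e r / g r < 0 := div_neg_of_pos_of_neg herpos hgneg
          have h1 : e r / g r ≤ t := by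
            have := neg_abs_le t
            have h2 : -|e r / g r| ≤ -|t| := neg_le_neg habs
            calc e r / g r = -|e r / g r| := by rw [abs_of_neg hdivneg, neg_neg]
              _ ≤ -|t| := h2
              _ ≤ t := neg_abs_le t
          have := mul_le_mul_of_nonpos_right h1 hgneg.le
          rwa [div_mul_cancel₀ (e r) hgr] at this
        · have h1 : t ≤ e r / g r := by
            calc t ≤ |t| := le_abs_self t
              _ ≤ |e r / g r| := habs
              _ = e r / g r := abs_of_pos (div_pos herpos hgpos)
          exact (le_div_iff₀ hgpos).mp h1
    have hsubh : Function.support h ⊆ Function.support e := by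
      intro r hr
      by_contra her
      simp only [Function.mem_support, not_not] at her
      have hgr : g r = 0 := by
        by_contra hgr
        exact (Function.mem_support.mp (hsub hgr)) her
      exact hr (by rw [happ, her, hgr, mul_zero, sub_zero])
    have hr0e : e r0 ≠ 0 := hsub hg0
    have hhr0 : h r0 = 0 := by
      rw [happ, ht, div_mul_cancel₀ (e r0) hg0, sub_self]
    have hzero : h = 0 := by
      by_contra hhne
      have := hmin h ⟨hker, hnn⟩ hhne hsubh
      have : r0 ∈ Function.support h := this ▸ Function.mem_support.mpr hr0e
      exact this hhr0
    have heq : ∀ r, e r = t * g r := fun r => by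
      have : h r = 0 := by rw [hzero]; rfl
      rw [happ] at this; linarith
    have htne : t ≠ 0 := by
      intro ht0
      apply hne
      funext r
      rw [heq r, ht0, zero_mul]; rfl
    apply Set.Subset.antisymm hsub
    intro r hr
    have : e r ≠ 0 := hr
    rw [heq r] at this
    exact Function.mem_support.mpr fun hg0' => this (by rw [hg0', mul_zero])
  · rintro ⟨hC, hne, hmin⟩
    exact ⟨hC, hne, fun g hg hgne hsub => hmin g hg.1 hgne hsub⟩
end

section
/- Up to multiplication by a positive scalar, a flux cone C ⊆ ℝ^R has only finitely many elementary flux modes; that is, the set of rays {λe : λ > 0} over all EFMs e of C is finite. -/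
/-!
An EFM is determined up to a positive factor by its sign pattern `R → SignType`. Indeed, if
`e₁` is an EFM and `e₂` a flux with the same signs, let `l` be the least ratio `e₁ r / e₂ r` over
the support; then `e₁ - l • e₂` is still a flux, its support lies in that of `e₁` but misses a
reaction attaining the minimum, so minimality forces `e₁ = l • e₂`. As there are finitely many
sign patterns, there are finitely many rays.
-/

open Function

theorem Set.finite_image_of_constant_on_fibers {α β γ : Type*} [Finite γ] (f : α → β) (g : α → γ)
    {s : Set α} (hfg : ∀ a ∈ s, ∀ b ∈ s, g a = g b → f a = f b) : (f '' s).Finite := by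
  refine (Set.finite_iUnion fun c => Set.Subsingleton.finite (s := f '' {a ∈ s | g a = c})
    ?_).subset ?_
  · rintro _ ⟨a, ⟨ha, rfl⟩, rfl⟩ _ ⟨b, ⟨hb, hba⟩, rfl⟩
    exact hfg a ha b hb hba.symm
  · rintro _ ⟨a, ha, rfl⟩
    exact Set.mem_iUnion.2 ⟨g a, a, ⟨ha, rfl⟩, rfl⟩

theorem setOf_pos_smul_smul_of_pos {K V : Type*} [Field K] [LinearOrder K]
    [IsStrictOrderedRing K] [AddCommGroup V] [Module K V] {c : K} (hc : 0 < c) (v : V) :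
    {x | ∃ l : K, 0 < l ∧ x = l • c • v} = {x | ∃ l : K, 0 < l ∧ x = l • v} := by
  ext x
  constructor
  · rintro ⟨l, hl, rfl⟩
    exact ⟨l * c, mul_pos hl hc, smul_smul l c v⟩
  · rintro ⟨l, hl, rfl⟩
    exact ⟨l / c, div_pos hl hc, by rw [smul_smul, div_mul_cancel₀ l hc.ne']⟩

theorem div_pos_of_sign_eq {K : Type*} [Field K] [LinearOrder K] [IsStrictOrderedRing K]
    {a b : K} (h : SignType.sign a = SignType.sign b) (ha : a ≠ 0) : 0 < a / b := by
  rcases ha.lt_or_gt with ha | ha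
  · rw [sign_neg ha, eq_comm, sign_eq_neg_one_iff] at h
    exact div_pos_of_neg_of_neg ha h
  · rw [sign_pos ha, eq_comm, sign_eq_one_iff] at h
    exact div_pos ha h

namespace IsEFM

variable {S R : Type*} [Fintype R] {N : Matrix S R ℝ} {Rirr : Set R} {e g : R → ℝ}

theorem eq_zero_of_support_subset_of_apply_eq_zero (he : IsEFM N Rirr e)
    (hg : g ∈ fluxCone N Rirr) (hsupp : support g ⊆ support e) {r : R} (her : e r ≠ 0)
    (hgr : g r = 0) : g = 0 := by
  by_contra hg0
  have hr : r ∈ support g := he.2.2 g hg hg0 hsupp ▸ her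
  exact hr hgr

theorem exists_pos_smul_eq_of_sign_eq {e₁ e₂ : R → ℝ} (h₁ : IsEFM N Rirr e₁)
    (h₂ : e₂ ∈ fluxCone N Rirr) (hsign : ∀ r, SignType.sign (e₁ r) = SignType.sign (e₂ r)) :
    ∃ l : ℝ, 0 < l ∧ e₁ = l • e₂ := by
  classical
  have hzero : ∀ r, e₁ r = 0 ↔ e₂ r = 0 := fun r => by
    rw [← sign_eq_zero_iff, hsign, sign_eq_zero_iff]
  obtain ⟨r₀, hr₀⟩ : ∃ r, e₁ r ≠ 0 := Function.ne_iff.mp h₁.2.1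
  obtain ⟨rmin, hrmin, hmin⟩ := Finset.exists_min_image
    (Finset.univ.filter fun r => e₁ r ≠ 0) (fun r => e₁ r / e₂ r) ⟨r₀, by simpa using hr₀⟩
  rw [Finset.mem_filter] at hrmin
  set l := e₁ rmin / e₂ rmin
  have hcone : e₁ - l • e₂ ∈ fluxCone N Rirr := by
    refine ⟨by rw [Matrix.mulVec_sub, Matrix.mulVec_smul, h₁.1.1, h₂.1, smul_zero, sub_zero], ?_⟩
    intro r hr
    by_cases h0 : e₁ r = 0
    · simp [h0, (hzero r).1 h0]
    · have hpos : 0 < e₂ r := (h₂.2 r hr).lt_of_ne (Ne.symm ((hzero r).not.1 h0))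
      have hle : l ≤ e₁ r / e₂ r := hmin r (by simpa using h0)
      simpa [sub_nonneg] using (le_div_iff₀ hpos).1 hle
  have hsupp : support (e₁ - l • e₂) ⊆ support e₁ := by
    intro r hr h0
    simp [h0, (hzero r).1 h0] at hr
  have hvanish : (e₁ - l • e₂) rmin = 0 := by
    simp [l, div_mul_cancel₀ _ ((hzero rmin).not.1 hrmin.2)]
  exact ⟨l, div_pos_of_sign_eq (hsign rmin) hrmin.2, sub_eq_zero.mp
    (h₁.eq_zero_of_support_subset_of_apply_eq_zero hcone hsupp hrmin.2 hvanish)⟩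

end IsEFM

theorem efm_rays_finite_general {S R : Type*} [Fintype R]
    (N : Matrix S R ℝ) (Rirr : Set R) :
    {s : Set (R → ℝ) | ∃ e : R → ℝ, IsEFM N Rirr e ∧
      s = {x | ∃ l : ℝ, 0 < l ∧ x = l • e}}.Finite := by
  let ray : (R → ℝ) → Set (R → ℝ) := fun e => {x | ∃ l : ℝ, 0 < l ∧ x = l • e}
  have hrays : {s | ∃ e, IsEFM N Rirr e ∧ s = ray e} = ray '' {e | IsEFM N Rirr e} := by
    ext s
    simp only [Set.mem_ofPred_eq, Set.mem_image, eq_comm (a := s)]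
  rw [hrays]
  refine Set.finite_image_of_constant_on_fibers ray (fun e r => SignType.sign (e r)) ?_
  intro e₁ h₁ e₂ h₂ hsign
  obtain ⟨c, hc, rfl⟩ := h₁.exists_pos_smul_eq_of_sign_eq h₂.1 (congrFun hsign)
  exact setOf_pos_smul_smul_of_pos hc e₂

/-- the set of rays `{λ • e : λ > 0}` over all EFMs `e` is finite. -/
theorem efm_rays_finite {S R : Type*} [Fintype S] [Fintype R]
    (N : Matrix S R ℝ) (Rirr : Set R) :
    {s : Set (R → ℝ) | ∃ e : R → ℝ, IsEFM N Rirr e ∧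
      s = {x | ∃ l : ℝ, 0 < l ∧ x = l • e}}.Finite :=
  efm_rays_finite_general N Rirr
end

section
/- Every vector f in a linear subspace S ⊆ ℝ^R is a conformal sum of elementary vectors of S: there exists a finite set E of elementary vectors of S, each conforming to f (i.e. σ(e) ≤ σ(f) componentwise in the sign partial order), such that f = Σ_{e∈E} e. -/
/-!
Induct on the support of `f`. Given `g` with `supp g ⊆ supp f` that agrees in sign with `f` at
some coordinate, subtracting the largest multiple `t • g` that keeps `f - t • g` conformal to `f`
kills a coordinate of `supp g`. Applied to a vector of strictly smaller support, this shows that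
a nonzero `f` admits a conformal elementary vector `e`; applied to `e` itself, it leaves a
remainder of smaller support, to which the induction hypothesis applies.
-/

/-- An elementary vector of a subspace: a nonzero element with inclusion-minimal
support among nonzero elements of the subspace. -/
def IsEV {R : Type*} (S : Submodule ℝ (R → ℝ)) (e : R → ℝ) : Prop :=
  e ∈ S ∧ e ≠ 0 ∧
    ∀ g ∈ S, g ≠ 0 → Function.support g ⊆ Function.support e →
      Function.support g = Function.support e

/-- `x` conforms to `y`: componentwise, `σ(x) ≤ σ(y)` in the sign partial order
generated by `0 < -` and `0 < +`. -/
def Conforms {R : Type*} (x y : R → ℝ) : Prop :=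
  ∀ r, x r = 0 ∨ (0 < x r ∧ 0 < y r) ∨ (x r < 0 ∧ y r < 0)

open Function

section

variable {R : Type*}

theorem Function.induction_on_support {M : Type*} [Zero M] [Finite R] {P : (R → M) → Prop}
    (ih : ∀ f, (∀ g, support g ⊂ support f → P g) → P f) (f : R → M) : P f :=
  (InvImage.wf support wellFounded_lt).induction f ih

namespace Conforms

theorem iff_mul_pos {x y : R → ℝ} : Conforms x y ↔ ∀ r, x r ≠ 0 → 0 < x r * y r := by
  refine forall_congr' fun r => ?_
  rw [or_iff_not_imp_left, mul_pos_iff]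

theorem refl (x : R → ℝ) : Conforms x x :=
  iff_mul_pos.2 fun _ hx => mul_self_pos.2 hx

theorem support_subset {x y : R → ℝ} (h : Conforms x y) : support x ⊆ support y :=
  fun r hx => right_ne_zero_of_mul (iff_mul_pos.1 h r hx).ne'

theorem trans {x y z : R → ℝ} (hxy : Conforms x y) (hyz : Conforms y z) : Conforms x z := by
  refine iff_mul_pos.2 fun r hx => ?_
  have hxy' := iff_mul_pos.1 hxy r hx
  have hyz' := iff_mul_pos.1 hyz r (hxy.support_subset hx)
  have : 0 < x r * z r * (y r * y r) := by
    rw [show x r * z r * (y r * y r) = x r * y r * (y r * z r) by ring]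
    exact mul_pos hxy' hyz'
  exact pos_of_mul_pos_left this (mul_self_nonneg _)

theorem smul {x y : R → ℝ} (h : Conforms x y) {t : ℝ} (ht : 0 < t) : Conforms (t • x) y := by
  refine iff_mul_pos.2 fun r htx => ?_
  rw [Pi.smul_apply, smul_eq_mul, mul_assoc]
  exact mul_pos ht (iff_mul_pos.1 h r (right_ne_zero_of_mul htx))

theorem ssubset_support {x y z : R → ℝ} (hxy : Conforms x y) (hzy : support z ⊆ support y)
    (hzx : ¬ support z ⊆ support x) : support x ⊂ support y :=
  hxy.support_subset.ssubset_of_not_subset fun hyx => hzx (hzy.trans hyx)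

end Conforms

theorem IsEV.smul {S : Submodule ℝ (R → ℝ)} {e : R → ℝ} (he : IsEV S e) {t : ℝ} (ht : t ≠ 0) :
    IsEV S (t • e) := by
  obtain ⟨heS, he0, hmin⟩ := he
  refine ⟨S.smul_mem t heS, smul_ne_zero ht he0, fun g hg hg0 hsub => ?_⟩
  rw [support_const_smul_of_ne_zero t e ht] at hsub ⊢
  exact hmin g hg hg0 hsub

/-- The witness `t` is the least ratio `f r / g r` over the coordinates where `g` and `f` have
the same sign. -/
theorem exists_pos_conforms_sub_smul [Finite R] {f g : R → ℝ} (hgf : support g ⊆ support f)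
    {r₀ : R} (hr₀ : 0 < g r₀ * f r₀) :
    ∃ t : ℝ, 0 < t ∧ Conforms (f - t • g) f ∧ ¬ support g ⊆ support (f - t • g) := by
  obtain ⟨s, hs, hmin⟩ := Set.exists_min_image {r | 0 < g r * f r} (fun r => f r / g r)
    (Set.toFinite _) ⟨r₀, hr₀⟩
  have hgs : g s ≠ 0 := left_ne_zero_of_mul hs.ne'
  set t := f s / g s
  have ht : 0 < t := by
    simpa only [mul_div_mul_left _ _ hgs] using div_pos hs (mul_self_pos.2 hgs)
  refine ⟨t, ht, Conforms.iff_mul_pos.2 fun r hr => ?_, fun hsub => hsub hgs ?_⟩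
  · simp only [Pi.sub_apply, Pi.smul_apply, smul_eq_mul] at hr ⊢
    have hfr : f r ≠ 0 := fun hfr => hr <| by
      rw [hfr, notMem_support.1 (mt (@hgf r) (not_not.2 hfr))]; ring
    refine lt_of_le_of_ne ?_ (mul_ne_zero hr hfr).symm
    by_cases hsame : 0 < g r * f r
    · have hle : t * (g r * f r) ≤ f r * f r := by
        calc t * (g r * f r) ≤ f r / g r * (g r * f r) :=
              mul_le_mul_of_nonneg_right (hmin r hsame) hsame.le
          _ = f r * f r := by field_simp [left_ne_zero_of_mul hsame.ne']
      nlinarith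
    · nlinarith [mul_nonneg ht.le (neg_nonneg.2 (not_lt.1 hsame)), mul_self_nonneg (f r)]
  · rw [Pi.sub_apply, Pi.smul_apply, smul_eq_mul, div_mul_cancel₀ (f s) hgs, sub_self]

theorem exists_isEV_conforms [Finite R] {S : Submodule ℝ (R → ℝ)} {f : R → ℝ} (hf : f ∈ S)
    (hf0 : f ≠ 0) : ∃ e, IsEV S e ∧ Conforms e f := by
  induction f using induction_on_support with | _ f ih => ?_
  by_cases hmin : ∀ g ∈ S, g ≠ 0 → support g ⊆ support f → support g = support f
  · exact ⟨f, ⟨hf, hf0, hmin⟩, Conforms.refl f⟩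
  push Not at hmin
  obtain ⟨g, hgS, hg0, hgf, hgf'⟩ := hmin
  obtain ⟨r₀, hr₀⟩ : ∃ r, g r ≠ 0 := Function.ne_iff.1 hg0
  obtain ⟨r₁, hr₁f, hr₁g⟩ := Set.exists_of_ssubset (hgf.ssubset_of_ne hgf')
  -- rescaling by `c` makes `g` agree in sign with `f` at `r₀`
  set c := g r₀ * f r₀
  have hc : c ≠ 0 := mul_ne_zero hr₀ (hgf hr₀)
  have hcgf : support (c • g) ⊆ support f := by rwa [support_const_smul_of_ne_zero c g hc]
  obtain ⟨t, -, hconf, hnot⟩ := exists_pos_conforms_sub_smul hcgf (r₀ := r₀)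
    (by rw [Pi.smul_apply, smul_eq_mul, mul_assoc]; exact mul_self_pos.2 hc)
  have hh0 : f - t • c • g ≠ 0 :=
    Function.ne_iff.2 ⟨r₁, by simpa [notMem_support.1 hr₁g] using hr₁f⟩
  obtain ⟨e, he, heh⟩ := ih _ (hconf.ssubset_support hcgf hnot)
    (S.sub_mem hf (S.smul_mem t (S.smul_mem c hgS))) hh0
  exact ⟨e, he, heh.trans hconf⟩

end

/-- Rockafellar: every vector of a subspace is a conformal sum of
elementary vectors of the subspace. -/
theorem conformal_sum_of_elementary_vectors {R : Type*} [Fintype R]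
    (S : Submodule ℝ (R → ℝ)) (f : R → ℝ) (hf : f ∈ S) :
    ∃ E : Finset (R → ℝ), (∀ e ∈ E, IsEV S e ∧ Conforms e f) ∧
      f = ∑ e ∈ E, e := by
  induction f using induction_on_support with | _ f ih => ?_
  rcases eq_or_ne f 0 with rfl | hf0
  · exact ⟨∅, by simp, by simp⟩
  obtain ⟨e, he, hef⟩ := exists_isEV_conforms hf hf0
  obtain ⟨r₀, hr₀⟩ : ∃ r, e r ≠ 0 := Function.ne_iff.1 he.2.1
  obtain ⟨t, ht, hconf, hnot⟩ :=
    exists_pos_conforms_sub_smul hef.support_subset (Conforms.iff_mul_pos.1 hef r₀ hr₀)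
  obtain ⟨E, hE, hsum⟩ := ih _ (hconf.ssubset_support hef.support_subset hnot)
    (S.sub_mem hf (S.smul_mem t he.1))
  have hnotin : t • e ∉ E := fun hmem => hnot <| by
    rw [← support_const_smul_of_ne_zero t e ht.ne']
    exact (hE _ hmem).2.support_subset
  refine ⟨insert (t • e) E, ?_, ?_⟩
  · simp only [Finset.forall_mem_insert]
    exact ⟨⟨he.smul ht.ne', hef.smul ht⟩, fun x hx => ⟨(hE x hx).1, (hE x hx).2.trans hconf⟩⟩
  · rw [Finset.sum_insert hnotin, ← hsum, add_sub_cancel]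
end

section
/- Suppose e is a nonzero element of the flux cone C that is NOT an elementary vector of ker(N), witnessed by some nonzero f ∈ ker(N) with supp(f) strictly contained in supp(e). Then there exists a nonzero element f' ∈ C with supp(f') strictly contained in supp(e); in particular e is not an EFM. (Explicitly: either f or −f or e + λf for a suitable maximal λ > 0 keeping nonnegativity on irreversible reactions serves as f'.) -/
open Function

theorem exists_add_mul_nonneg_and_eq_zero {ι 𝕜 : Type*} [Finite ι] [Field 𝕜] [LinearOrder 𝕜]
    [IsStrictOrderedRing 𝕜] (s : Set ι) {e f : ι → 𝕜} (he : ∀ i ∈ s, 0 ≤ e i)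
    (hf : ∃ i ∈ s, f i < 0) :
    ∃ t : 𝕜, (∀ i ∈ s, 0 ≤ e i + t * f i) ∧ ∃ i, f i ≠ 0 ∧ e i + t * f i = 0 := by
  obtain ⟨j, ⟨hjs, hfj⟩, hmin⟩ :=
    Set.exists_min_image {i | i ∈ s ∧ f i < 0} (fun i => e i / -f i) (Set.toFinite _) hf
  have ht : 0 ≤ e j / -f j := div_nonneg (he j hjs) (by linarith)
  refine ⟨e j / -f j, fun i hi => ?_, j, hfj.ne, by field_simp [hfj.ne]; ring⟩
  rcases le_or_gt 0 (f i) with hfi | hfi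
  · exact add_nonneg (he i hi) (mul_nonneg ht hfi)
  · have := (le_div_iff₀ (neg_pos.mpr hfi)).mp (hmin i ⟨hi, hfi⟩)
    linarith

section Support

variable {ι 𝕜 : Type*} [Semiring 𝕜] {e f : ι → 𝕜}

theorem add_smul_ne_zero_of_support_ssubset (h : support f ⊂ support e) (t : 𝕜) :
    e + t • f ≠ 0 := by
  obtain ⟨i, hie, hif⟩ := Set.exists_of_ssubset h
  intro h0
  have := congrFun h0 i
  simp_all

theorem support_add_smul_ssubset (h : support f ⊆ support e) {t : 𝕜} {i : ι}
    (hi : i ∈ support e) (hzero : (e + t • f) i = 0) :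
    support (e + t • f) ⊂ support e := by
  have hsub : support (e + t • f) ⊆ support e :=
    (support_add _ _).trans (Set.union_subset le_rfl ((support_smul_subset_right _ _).trans h))
  exact (Set.ssubset_iff_of_subset hsub).mpr ⟨i, hi, fun hi' => hi' hzero⟩

end Support

section FluxCone

variable {S R : Type*} [Fintype R] {N : Matrix S R ℝ} {Rirr : Set R} {e f : R → ℝ}

theorem exists_mem_fluxCone_support_ssubset (he : e ∈ fluxCone N Rirr) (hf : N.mulVec f = 0)
    (hfne : f ≠ 0) (hsupp : support f ⊂ support e) :
    ∃ g ∈ fluxCone N Rirr, g ≠ 0 ∧ support g ⊂ support e := by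
  by_cases hnonneg : ∀ r ∈ Rirr, 0 ≤ f r
  · exact ⟨f, ⟨hf, hnonneg⟩, hfne, hsupp⟩
  push Not at hnonneg
  obtain ⟨t, hstep, r, hfr, hzero⟩ := exists_add_mul_nonneg_and_eq_zero Rirr he.2 hnonneg
  have hker : N.mulVec (e + t • f) = 0 := by
    simp [Matrix.mulVec_add, Matrix.mulVec_smul, he.1, hf]
  exact ⟨e + t • f, ⟨hker, hstep⟩, add_smul_ne_zero_of_support_ssubset hsupp t,
    support_add_smul_ssubset hsupp.subset (hsupp.subset hfr) hzero⟩

theorem not_isEFM_of_mem_fluxCone_support_ssubset {g : R → ℝ} (hg : g ∈ fluxCone N Rirr)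
    (hgne : g ≠ 0) (hsupp : support g ⊂ support e) : ¬ IsEFM N Rirr e :=
  fun hE => hsupp.ne (hE.2.2 g hg hgne hsupp.subset)

end FluxCone

theorem not_efm_of_smaller_kernel_support_general {S R : Type*} [Fintype R]
    (N : Matrix S R ℝ) (Rirr : Set R) (e f : R → ℝ)
    (he : e ∈ fluxCone N Rirr)
    (hf : N.mulVec f = 0) (hfne : f ≠ 0)
    (hsupp : Function.support f ⊂ Function.support e) :
    (∃ f' ∈ fluxCone N Rirr, f' ≠ 0 ∧
      Function.support f' ⊂ Function.support e) ∧ ¬ IsEFM N Rirr e := by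
  obtain ⟨g, hg, hgne, hgsupp⟩ := exists_mem_fluxCone_support_ssubset he hf hfne hsupp
  exact ⟨⟨g, hg, hgne, hgsupp⟩, not_isEFM_of_mem_fluxCone_support_ssubset hg hgne hgsupp⟩

/-- if `e` is a nonzero flux mode and some nonzero `f ∈ ker N` has
support strictly contained in `supp e`, then some nonzero element of the flux
cone has support strictly contained in `supp e`; in particular `e` is not an
EFM. -/
theorem not_efm_of_smaller_kernel_support {S R : Type*} [Fintype S] [Fintype R]
    (N : Matrix S R ℝ) (Rirr : Set R) (e f : R → ℝ)
    (he : e ∈ fluxCone N Rirr) (hene : e ≠ 0)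
    (hf : N.mulVec f = 0) (hfne : f ≠ 0)
    (hsupp : Function.support f ⊂ Function.support e) :
    (∃ f' ∈ fluxCone N Rirr, f' ≠ 0 ∧
      Function.support f' ⊂ Function.support e) ∧ ¬ IsEFM N Rirr e :=
  not_efm_of_smaller_kernel_support_general N Rirr e f he hf hfne hsupp
end

section
/- Equivalence of problem (2) and (4): for a kinetic metabolic network with rates v̄ = c ∘ κ(x̄,p), for every feasible solution (x̄, c) of the enzyme allocation problem (maximize v̄_{r*} subject to Σ_r w_r c_r = c^tot, v̄ ∈ C, v̄_{r*} > 0) there exists a feasible solution (x̄, c') additionally satisfying c'_r = 0 whenever v̄'_r = 0, with objective value v̄'_{r*} ≥ v̄_{r*}. Consequently the two problems have the same optimal value. -/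
open Function

theorem smul_mem_fluxCone {S R : Type*} [Fintype R] {N : Matrix S R ℝ} {Rirr : Set R}
    {f : R → ℝ} {a : ℝ} (ha : 0 ≤ a) (hf : f ∈ fluxCone N Rirr) :
    a • f ∈ fluxCone N Rirr :=
  ⟨by rw [Matrix.mulVec_smul, hf.1, smul_zero], fun r hr => mul_nonneg ha (hf.2 r hr)⟩

theorem indicator_support_mul_mul {R M : Type*} [MulZeroClass M] (c k : R → M) (r : R) :
    (support (c * k)).indicator c r * k r = c r * k r := by
  by_cases hr : r ∈ support (c * k)
  · rw [Set.indicator_of_mem hr]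
  · rw [Set.indicator_of_notMem hr, zero_mul]
    exact (notMem_support.mp hr).symm

section WeightedSum

variable {R : Type*} [Fintype R]

theorem sum_mul_indicator_le {w c : R → ℝ} (hw : ∀ r, 0 ≤ w r) (hc : ∀ r, 0 ≤ c r)
    (s : Set R) : ∑ r, w r * s.indicator c r ≤ ∑ r, w r * c r :=
  Finset.sum_le_sum fun r _ =>
    mul_le_mul_of_nonneg_left (Set.indicator_le_self' (fun r _ => hc r) r) (hw r)

theorem sum_mul_div_sum_smul (w d : R → ℝ) (t : ℝ) (hd : ∑ r, w r * d r ≠ 0) :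
    ∑ r, w r * ((t / ∑ r, w r * d r) • d) r = t := by
  simp only [Pi.smul_apply, smul_eq_mul, mul_left_comm (w _), ← Finset.mul_sum]
  exact div_mul_cancel₀ t hd

end WeightedSum

theorem enzyme_allocation_support_restriction_general {S R : Type*}
    [Fintype S] [Fintype R] (N : Matrix S R ℝ) (Rirr : Set R)
    (κ : (S → ℝ) → R → ℝ) (w : R → ℝ) (hw : ∀ r, 0 < w r)
    (ctot : ℝ) (rstar : R)
    (x : S → ℝ) (c : R → ℝ)
    (hc : ∀ r, 0 ≤ c r) (hbudget : ∑ r, w r * c r = ctot)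
    (hC : (fun r => c r * κ x r) ∈ fluxCone N Rirr)
    (hobj : 0 < c rstar * κ x rstar) :
    (∃ c' : R → ℝ,
      (∀ r, 0 ≤ c' r) ∧ (∑ r, w r * c' r = ctot) ∧
      (fun r => c' r * κ x r) ∈ fluxCone N Rirr ∧
      0 < c' rstar * κ x rstar ∧
      (∀ r, c' r * κ x r = 0 → c' r = 0) ∧
      c rstar * κ x rstar ≤ c' rstar * κ x rstar) := by
  set d := (support (c * κ x)).indicator c
  set B := ∑ r, w r * d r
  have hrate (r : R) : d r * κ x r = c r * κ x r := indicator_support_mul_mul c (κ x) r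
  have hd : ∀ r, 0 ≤ d r := Set.indicator_nonneg fun r _ => hc r
  have hstar : d rstar = c rstar := Set.indicator_of_mem hobj.ne' c
  have hc_star : 0 < c rstar := (hc rstar).lt_of_ne fun h => by simp [← h] at hobj
  have hB_pos : 0 < B := Finset.sum_pos' (fun r _ => mul_nonneg (hw r).le (hd r))
    ⟨rstar, Finset.mem_univ _, hstar ▸ mul_pos (hw rstar) hc_star⟩
  have hB_le : B ≤ ctot := hbudget ▸ sum_mul_indicator_le (fun r => (hw r).le) hc _
  have hscale : 1 ≤ ctot / B := (one_le_div hB_pos).mpr hB_le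
  have hscale_pos : 0 < ctot / B := one_pos.trans_le hscale
  have hrate_scaled (r : R) : ((ctot / B) • d) r * κ x r = (ctot / B) * (c r * κ x r) := by
    rw [Pi.smul_apply, smul_eq_mul, mul_assoc, hrate]
  refine ⟨(ctot / B) • d, fun r => mul_nonneg hscale_pos.le (hd r),
    sum_mul_div_sum_smul w d ctot hB_pos.ne', ?_, ?_, fun r hr => ?_, ?_⟩
  · simp only [hrate_scaled]
    exact smul_mem_fluxCone hscale_pos.le hC
  · rw [hrate_scaled]; exact mul_pos hscale_pos hobj
  · rw [hrate_scaled, mul_eq_zero, or_iff_right hscale_pos.ne'] at hr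
    have hdr : d r = 0 := Set.indicator_of_notMem (notMem_support (f := c * κ x).mpr hr) c
    rw [Pi.smul_apply, hdr, smul_zero]
  · rw [hrate_scaled]; exact le_mul_of_one_le_left hobj.le hscale

/-- for every feasible solution `(x̄, c)` of the enzyme allocation
problem there is a feasible solution `(x̄, c')` with `c'_r = 0` whenever the
corresponding flux vanishes, and with objective value at least as large;
conversely, any solution feasible for the augmented problem is feasible for the
original one. Hence the two problems have the same optimal value. -/
theorem enzyme_allocation_support_restriction {S R : Type*}
    [Fintype S] [Fintype R] (N : Matrix S R ℝ) (Rirr : Set R)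
    (κ : (S → ℝ) → R → ℝ) (w : R → ℝ) (hw : ∀ r, 0 < w r)
    (ctot : ℝ) (hctot : 0 < ctot) (rstar : R)
    (x : S → ℝ) (c : R → ℝ)
    (hc : ∀ r, 0 ≤ c r) (hbudget : ∑ r, w r * c r = ctot)
    (hC : (fun r => c r * κ x r) ∈ fluxCone N Rirr)
    (hobj : 0 < c rstar * κ x rstar) :
    (∃ c' : R → ℝ,
      (∀ r, 0 ≤ c' r) ∧ (∑ r, w r * c' r = ctot) ∧
      (fun r => c' r * κ x r) ∈ fluxCone N Rirr ∧
      0 < c' rstar * κ x rstar ∧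
      (∀ r, c' r * κ x r = 0 → c' r = 0) ∧
      c rstar * κ x rstar ≤ c' rstar * κ x rstar) :=
  enzyme_allocation_support_restriction_general N Rirr κ w hw ctot rstar x c hc hbudget hC hobj
end
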